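/- arXiv:1406.7851 — 6 statements merged into one kernel-verified Lean document; each statement's English description precedes it below -/
import Mathlib

section
/- Let V ≥ 2 and N = V(V−1)/2. For every probability mass function p : {0,1}^N → [0,1] with Σ_{a∈{0,1}^N} p(a) = 1 and p(a) > 0 for all a ∈ {0,1}^N, there exist H ∈ ℕ, weights ν = (ν_1,…,ν_H) in the simplex Δ_H, a vector Z ∈ ℝ^N, an integer R ≥ 1, and for each h = 1,…,H a matrix X^{(h)} ∈ ℝ^{V×R} and a vector λ^{(h)} ∈ ℝ^R with nonnegative entries, such that for all a ∈ {0,1}^N, p(a) = Σ_{h=1}^H ν_h ∏_{l=1}^N (π^{(h)}_l)^{a_l} (1−π^{(h)}_l)^{1−a_l}, where π^{(h)}_l = 1/(1 + exp(−Z_l − L(X^{(h)} Λ^{(h)} X^{(h)T})_l)) and Λ^{(h)} is the R×R diagonal matrix with diagonal λ^{(h)}. -/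
/-!
Let `G_ε` be the transition matrix of the binary symmetric channel with crossover probability
`ε`; its `N`-fold tensor power `G_ε^{⊗N}` has as columns the product Bernoulli distributions
concentrated near the points `b ∈ {0,1}^N`. Since `G_ε^{⊗N}` is invertible for `ε ≠ 1/2`, every
`p` equals `G_ε^{⊗N} ν` with `ν = (G_ε^{⊗N})⁻¹ p`, and `ν → p` as `ε → 0`; for a strictly positive
`p` and small `ε > 0` this `ν` is a probability vector. The component indexed by `b` has edge
probabilities `1 - ε` or `ε` according to `b`, i.e. logits `±c` with `c = log((1 - ε)/ε) ≥ 0`,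
which is `Z + L(X Λ Xᵀ)` for `Z ≡ -c`, `X` the vertex-edge incidence matrix of the complete graph
and `Λ` the diagonal matrix with entries `2c · b`.
-/

open Matrix

/-- The index set of edges: pairs `(v, u)` with `u < v`, of cardinality `V(V-1)/2`. -/
abbrev EdgeIdx (V : ℕ) := {q : Fin V × Fin V // q.2 < q.1}

open Filter Topology Real

namespace MixtureLowRank

/-- Transition probabilities of the binary symmetric channel with crossover probability `ε`. -/
noncomputable def bsc (ε : ℝ) (x y : Bool) : ℝ := if x = y then 1 - ε else ε

/-- The inverse of the matrix `bsc ε`, for `ε ≠ 1/2`. -/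
noncomputable def bscInv (ε : ℝ) (x y : Bool) : ℝ :=
  if x = y then (1 - ε) / (1 - 2 * ε) else -ε / (1 - 2 * ε)

lemma sum_bscInv_mul_bsc {ε : ℝ} (hε : 1 - 2 * ε ≠ 0) (y z : Bool) :
    ∑ x, bscInv ε x y * bsc ε x z = if y = z then 1 else 0 := by
  have hε' : 1 - ε * 2 ≠ 0 := by rwa [mul_comm] at hε
  cases y <;> cases z <;> simp [bscInv, bsc] <;> field_simp <;> ring

lemma sum_bscInv {ε : ℝ} (hε : 1 - 2 * ε ≠ 0) (y : Bool) : ∑ x, bscInv ε x y = 1 := by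
  have hε' : 1 - ε * 2 ≠ 0 := by rwa [mul_comm] at hε
  cases y <;> simp [bscInv] <;> field_simp <;> ring

lemma tendsto_bscInv (x y : Bool) :
    Tendsto (fun ε => bscInv ε x y) (𝓝 0) (𝓝 (if x = y then 1 else 0)) := by
  have hcont : ContinuousAt (fun ε => bscInv ε x y) 0 := by
    unfold bscInv
    split_ifs <;> exact ContinuousAt.div (by fun_prop) (by fun_prop) (by norm_num)
  simpa [bscInv, apply_ite] using hcont.tendsto

lemma bsc_eq_ite (ε : ℝ) (x y : Bool) :
    bsc ε x y = if y then bsc ε x true else 1 - bsc ε x true := by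
  cases x <;> cases y <;> simp [bsc]

section ProductChannel

variable {ι : Type*} [Fintype ι] [DecidableEq ι]

/-- The coefficients of `p` in the basis of product distributions `∏ i, bsc ε (b i) ·`. -/
noncomputable def mixWeight (p : (ι → Bool) → ℝ) (ε : ℝ) (b : ι → Bool) : ℝ :=
  ∑ a, p a * ∏ i, bscInv ε (b i) (a i)

lemma sum_mixWeight_mul_prod_bsc {ε : ℝ} (hε : 1 - 2 * ε ≠ 0) (p : (ι → Bool) → ℝ)
    (a : ι → Bool) : ∑ b, mixWeight p ε b * ∏ i, bsc ε (b i) (a i) = p a := by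
  calc ∑ b, mixWeight p ε b * ∏ i, bsc ε (b i) (a i)
      = ∑ a', p a' * ∑ b : ι → Bool, ∏ i, bscInv ε (b i) (a' i) * bsc ε (b i) (a i) := by
        simp only [mixWeight, Finset.sum_mul, Finset.mul_sum, mul_assoc,
          ← Finset.prod_mul_distrib]
        exact Finset.sum_comm
    _ = ∑ a', p a' * if a' = a then 1 else 0 := by
        refine Finset.sum_congr rfl fun a' _ => ?_
        rw [← Fintype.prod_sum fun i x => bscInv ε x (a' i) * bsc ε x (a i)]
        simp only [sum_bscInv_mul_bsc hε, Fintype.prod_boole, funext_iff]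
    _ = p a := by simp

lemma sum_mixWeight {ε : ℝ} (hε : 1 - 2 * ε ≠ 0) (p : (ι → Bool) → ℝ) :
    ∑ b, mixWeight p ε b = ∑ a, p a := by
  simp only [mixWeight]
  rw [Finset.sum_comm]
  refine Finset.sum_congr rfl fun a _ => ?_
  rw [← Finset.mul_sum, ← Fintype.prod_sum fun i x => bscInv ε x (a i)]
  simp only [sum_bscInv hε, Finset.prod_const_one, mul_one]

lemma tendsto_mixWeight (p : (ι → Bool) → ℝ) (b : ι → Bool) :
    Tendsto (fun ε => mixWeight p ε b) (𝓝 0) (𝓝 (p b)) := by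
  have h : Tendsto (fun ε => mixWeight p ε b) (𝓝 0)
      (𝓝 (∑ a, p a * ∏ i, if b i = a i then 1 else 0)) :=
    tendsto_finsetSum _ fun a _ =>
      tendsto_const_nhds.mul (tendsto_finsetProd _ fun i _ => tendsto_bscInv _ _)
  simpa [Fintype.prod_boole, ← funext_iff] using h

theorem exists_bsc_mixture {p : (ι → Bool) → ℝ} (hsum : ∑ a, p a = 1) (hpos : ∀ a, 0 < p a) :
    ∃ (ε : ℝ) (ν : (ι → Bool) → ℝ), 0 < ε ∧ ε < 1 / 2 ∧ (∀ b, 0 < ν b) ∧ ∑ b, ν b = 1 ∧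
      ∀ a, p a = ∑ b, ν b * ∏ i, bsc ε (b i) (a i) := by
  have hweight : ∀ᶠ ε in 𝓝[>] 0, ∀ b, 0 < mixWeight p ε b :=
    (eventually_all.2 fun b =>
      (tendsto_mixWeight p b).eventually (eventually_gt_nhds (hpos b))).filter_mono
      nhdsWithin_le_nhds
  obtain ⟨ε, hνpos, hε0, hε1⟩ :=
    (hweight.and (Ioo_mem_nhdsGT (by norm_num : (0 : ℝ) < 1 / 2))).exists
  have hε : 1 - 2 * ε ≠ 0 := by linarith
  exact ⟨ε, mixWeight p ε, hε0, hε1, hνpos, by rw [sum_mixWeight hε, hsum],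
    fun a => (sum_mixWeight_mul_prod_bsc hε p a).symm⟩

end ProductChannel

lemma sigmoid_log_div {x : ℝ} (hx0 : 0 < x) (hx1 : x < 1) : sigmoid (log (x / (1 - x))) = x := by
  have : 0 < 1 - x := by linarith
  rw [sigmoid_def, exp_neg, exp_log (by positivity), inv_div]
  field_simp
  ring

lemma sigmoid_logit_bsc {ε : ℝ} (hε0 : 0 < ε) (hε1 : ε < 1) (x : Bool) :
    sigmoid (-log ((1 - ε) / ε) + if x then 2 * log ((1 - ε) / ε) else 0) = bsc ε x true := by
  have h := sigmoid_log_div (x := 1 - ε) (by linarith) (by linarith)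
  rw [sub_sub_cancel] at h
  cases x
  · rw [if_neg Bool.false_ne_true, add_zero, sigmoid_neg, h]
    simp [bsc]
  · rw [if_pos rfl, neg_add_eq_sub, two_mul, add_sub_cancel_right, h]
    simp [bsc]

def edgeIncidence (V : ℕ) : Matrix (Fin V) (EdgeIdx V) ℝ :=
  of fun v e => if e.1.1 = v ∨ e.1.2 = v then 1 else 0

lemma edgeIncidence_mul_diagonal_mul_transpose_apply {V : ℕ} (w : EdgeIdx V → ℝ)
    (l : EdgeIdx V) : (edgeIncidence V * diagonal w * (edgeIncidence V)ᵀ) l.1.1 l.1.2 = w l := by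
  obtain ⟨⟨v, u⟩, huv⟩ := l
  have hne : v ≠ u := huv.ne'
  rw [mul_apply, Finset.sum_eq_single ⟨(v, u), huv⟩]
  · simp [edgeIncidence, hne]
  · rintro ⟨⟨c, d⟩, hdc⟩ - he
    have : ¬ ((c = v ∨ d = v) ∧ (c = u ∨ d = u)) := by
      rintro ⟨rfl | rfl, rfl | rfl⟩
      exacts [hne rfl, he rfl, lt_asymm hdc huv, hne rfl]
    simp only [mul_diagonal, transpose_apply, edgeIncidence, of_apply]
    split_ifs <;> simp_all
  · simp

lemma submatrix_mul_diagonal_mul_transpose_submatrix {m n κ α : Type*} [Fintype n] [Fintype κ]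
    [DecidableEq n] [DecidableEq κ] [CommSemiring α] (A : Matrix m n α) (e : κ ≃ n) (w : n → α) :
    A.submatrix id e * diagonal (w ∘ e) * (A.submatrix id e)ᵀ = A * diagonal w * Aᵀ := by
  rw [transpose_submatrix, ← submatrix_diagonal_equiv, submatrix_mul_equiv, submatrix_mul_equiv]
  rfl

end MixtureLowRank

open MixtureLowRank in
/-- **Lemma 2.1**: any strictly positive pmf on the space of binary undirected networks
admits a mixture-of-low-rank-logistic-factorizations representation. -/
theorem mixture_lowrank_representation (V : ℕ) (hV : 2 ≤ V)
    (p : (EdgeIdx V → Bool) → ℝ)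
    (hsum : ∑ a : EdgeIdx V → Bool, p a = 1)
    (hpos : ∀ a : EdgeIdx V → Bool, 0 < p a) :
    ∃ (H : ℕ) (ν : Fin H → ℝ) (Z : EdgeIdx V → ℝ) (R : ℕ)
      (X : Fin H → Matrix (Fin V) (Fin R) ℝ) (lam : Fin H → Fin R → ℝ),
      1 ≤ R ∧
      (∀ h, 0 ≤ ν h) ∧ (∑ h, ν h = 1) ∧
      (∀ h r, 0 ≤ lam h r) ∧
      (∀ a : EdgeIdx V → Bool,
        p a = ∑ h, ν h * ∏ l : EdgeIdx V,
          (if a l then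
            1 / (1 + Real.exp (-(Z l +
              (X h * Matrix.diagonal (lam h) * (X h)ᵀ) l.1.1 l.1.2)))
          else
            1 - 1 / (1 + Real.exp (-(Z l +
              (X h * Matrix.diagonal (lam h) * (X h)ᵀ) l.1.1 l.1.2))))) := by
  obtain ⟨ε, ν, hε0, hε1, hνpos, hνsum, hp⟩ := exists_bsc_mixture hsum hpos
  set c := log ((1 - ε) / ε)
  have hc : 0 ≤ c := log_nonneg <| by rw [le_div_iff₀ hε0]; linarith
  have : Nonempty (EdgeIdx V) := ⟨⟨(⟨1, by omega⟩, ⟨0, by omega⟩), Fin.mk_lt_mk.2 zero_lt_one⟩⟩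
  let eH := (Fintype.equivFin (EdgeIdx V → Bool)).symm
  let eR := (Fintype.equivFin (EdgeIdx V)).symm
  refine ⟨_, ν ∘ eH, fun _ => -c, _, fun _ => (edgeIncidence V).submatrix id eR,
    fun h => (fun l => if eH h l then 2 * c else 0) ∘ eR, Fintype.card_pos,
    fun h => (hνpos _).le, (Equiv.sum_comp eH ν).trans hνsum, fun h r => ?_, fun a => ?_⟩
  · dsimp only [Function.comp_apply]
    split_ifs <;> positivity
  · rw [hp a, ← Equiv.sum_comp eH]
    refine Finset.sum_congr rfl fun h _ => congrArg _ <| Finset.prod_congr rfl fun l _ => ?_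
    rw [submatrix_mul_diagonal_mul_transpose_submatrix,
      edgeIncidence_mul_diagonal_mul_transpose_apply, bsc_eq_ite,
      ← sigmoid_logit_bsc hε0 (by linarith), one_div, ← sigmoid_def]
end

section
/- Fix V ≥ 2, N = V(V−1)/2, H ≥ 1, and R ≥ V. Let Π_Z be a Borel probability measure on ℝ^N, Π_X a Borel probability measure on ℝ^{V×R}, and Π_λ a Borel probability measure on the nonnegative orthant ℝ_{≥0}^R, each with full L1 support on its space: Π_Z assigns positive mass to every set {Z : Σ_l |Z_l − Z^0_l| < ε} for every Z^0 ∈ ℝ^N and ε > 0, Π_X assigns positive mass to every set {X : Σ_{v,r} |X_{vr} − X^0_{vr}| < ε} for every X^0 ∈ ℝ^{V×R} and ε > 0, and Π_λ assigns positive mass to every set {λ : Σ_r |λ_r − λ^0_r| < ε} for every λ^0 ∈ ℝ_{≥0}^R and ε > 0. Let Π_π be the joint law of (π^{(1)},…,π^{(H)}) where Z ∼ Π_Z, the pairs (X^{(h)}, λ^{(h)}) ∼ Π_X ⊗ Π_λ are independent across h = 1,…,H and independent of Z, and π^{(h)}_l = 1/(1 + exp(−Z_l − L(X^{(h)} Λ^{(h)}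 X^{(h)T})_l)) with Λ^{(h)} the diagonal matrix with diagonal λ^{(h)}. Then for every collection (π^{0(1)},…,π^{0(H)}) ∈ ((0,1)^N)^H and every ε_π > 0, Π_π{Σ_{h=1}^H Σ_{l=1}^N |π^{(h)}_l − π^{0(h)}_l| < ε_π} > 0. -/
/-!
Since `σ` maps `ℝ` onto `(0, 1)`, it suffices to realise arbitrary logits. Taking `Z⁰ = 0` and
`λ⁰ = 1`, the logits are the strictly lower-triangular entries of a Gram matrix `X Xᵀ`, and every
vector of `ℝ^N` is such a part: the unit lower-triangular `V × V` matrix `L` with prescribed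
entries of `L Lᵀ` below the diagonal is solved for column by column, and fits into `V × R` since
`R ≥ V`. The map `(Z, (X⁽ʰ⁾, λ⁽ʰ⁾)ₕ) ↦ π` is continuous, so the preimage of the `L1`
neighbourhood of `π⁰` contains a sup-metric ball around this point, i.e. a product of balls of
the factors. Each factor ball contains an `L1` ball of positive mass (the centre `λ⁰ = 1` lies in
the orthant), and product measures of sets of positive mass are positive.
-/

open MeasureTheory Matrix

open Finset Metric Topology

/-- Entry `(v, u)` of the unit lower-triangular matrix `L` whose Gram matrix `L Lᵀ` has entry
`t v u` below the diagonal; column `u` is determined by the columns before it. -/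
noncomputable def unitLowerCholesky (t : ℕ → ℕ → ℝ) (v u : ℕ) : ℝ :=
  if u < v then t v u - ∑ w : Fin u, unitLowerCholesky t v w * unitLowerCholesky t u w
  else if u = v then 1 else 0
termination_by u

section UnitLowerCholesky

variable (t : ℕ → ℕ → ℝ) {v u : ℕ}

local notation "L" => unitLowerCholesky t

lemma unitLowerCholesky_of_lt (h : u < v) :
    L v u = t v u - ∑ w ∈ range u, L v w * L u w := by
  rw [unitLowerCholesky, if_pos h, ← Fin.sum_univ_eq_sum_range (fun w => L v w * L u w)]

lemma unitLowerCholesky_self (v : ℕ) : L v v = 1 := by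
  rw [unitLowerCholesky, if_neg (lt_irrefl v), if_pos rfl]

lemma unitLowerCholesky_of_gt (h : v < u) : L v u = 0 := by
  rw [unitLowerCholesky, if_neg h.not_gt, if_neg h.ne']

lemma sum_unitLowerCholesky_mul {n : ℕ} (h : u < v) (hn : u < n) :
    ∑ r ∈ range n, L v r * L u r = t v u := by
  have hvanish : ∀ r ∈ range n, r ∉ range (u + 1) → L v r * L u r = 0 := fun r _ hr => by
    rw [unitLowerCholesky_of_gt t (v := u) (by simpa using hr), mul_zero]
  rw [← sum_subset (range_subset_range.mpr hn) hvanish, sum_range_succ,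
    unitLowerCholesky_self, mul_one, unitLowerCholesky_of_lt t h, add_sub_cancel]

end UnitLowerCholesky

lemma exists_mul_transpose_apply_eq {V R : ℕ} (hR : V ≤ R) (t : EdgeIdx V → ℝ) :
    ∃ X : Matrix (Fin V) (Fin R) ℝ, ∀ l : EdgeIdx V, (X * Xᵀ) l.1.1 l.1.2 = t l := by
  let t' : ℕ → ℕ → ℝ := fun v u =>
    if h : u < v ∧ v < V then t ⟨(⟨v, h.2⟩, ⟨u, h.1.trans h.2⟩), h.1⟩ else 0
  refine ⟨of fun v r => unitLowerCholesky t' v r, fun ⟨(v, u), hl⟩ => ?_⟩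
  have hlt : (u : ℕ) < v := hl
  simp only [mul_apply, transpose_apply, of_apply]
  rw [Fin.sum_univ_eq_sum_range (fun r => unitLowerCholesky t' v r * unitLowerCholesky t' u r),
    sum_unitLowerCholesky_mul t' hlt (by omega)]
  simp [t', hlt]

lemma exists_sigmoid_mul_transpose_apply_eq {V R : ℕ} (hR : V ≤ R) (p : EdgeIdx V → ℝ)
    (hp : ∀ l, p l ∈ Set.Ioo 0 1) :
    ∃ X : Matrix (Fin V) (Fin R) ℝ, ∀ l : EdgeIdx V,
      Real.sigmoid ((X * Xᵀ) l.1.1 l.1.2) = p l := by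
  choose t ht using fun l => Real.range_sigmoid ▸ hp l
  obtain ⟨X, hX⟩ := exists_mul_transpose_apply_eq hR t
  exact ⟨X, fun l => by rw [hX, ht]⟩

lemma dist_pi_le_sum_dist {ι : Type*} [Fintype ι] {β : ι → Type*}
    [∀ i, PseudoMetricSpace (β i)] (x y : ∀ i, β i) : dist x y ≤ ∑ i, dist (x i) (y i) :=
  (dist_pi_le_iff (sum_nonneg fun _ _ => dist_nonneg)).2 fun i =>
    single_le_sum (f := fun i => dist (x i) (y i)) (fun _ _ => dist_nonneg) (mem_univ i)

section L1Ball

variable {ι κ : Type*} [Fintype ι] [Fintype κ]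

lemma setOf_sum_abs_sub_lt_subset_ball (x₀ : ι → ℝ) (δ : ℝ) :
    {x | ∑ i, |x i - x₀ i| < δ} ⊆ ball x₀ δ := fun x (hx : ∑ i, |x i - x₀ i| < δ) =>
  (dist_pi_le_sum_dist x x₀).trans_lt (by simpa only [Real.dist_eq] using hx)

lemma setOf_sum_sum_abs_sub_lt_subset_ball (x₀ : ι → κ → ℝ) (δ : ℝ) :
    {x | ∑ i, ∑ j, |x i j - x₀ i j| < δ} ⊆ ball x₀ δ := fun x hx =>
  calc dist x x₀ ≤ ∑ i, dist (x i) (x₀ i) := dist_pi_le_sum_dist x x₀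
    _ ≤ ∑ i, ∑ j, |x i j - x₀ i j| := by
      gcongr with i _
      simpa only [Real.dist_eq] using dist_pi_le_sum_dist (x i) (x₀ i)
    _ < δ := hx

end L1Ball

namespace MeasureTheory.Measure

variable {α β : Type*} [PseudoMetricSpace α] [PseudoMetricSpace β]
  [MeasurableSpace α] [MeasurableSpace β]

lemma prod_ball_pos {μ : Measure α} {ν : Measure β} [SFinite ν] {x : α} {y : β} {r : ℝ}
    (hμ : 0 < μ (ball x r)) (hν : 0 < ν (ball y r)) : 0 < μ.prod ν (ball (x, y) r) := by
  rw [← ball_prod_same, prod_prod]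
  exact ENNReal.mul_pos hμ.ne' hν.ne'

lemma pi_ball_pos {ι : Type*} [Fintype ι] {α : ι → Type*} [∀ i, MetricSpace (α i)]
    [∀ i, MeasurableSpace (α i)] {μ : ∀ i, Measure (α i)} [∀ i, SigmaFinite (μ i)]
    {x : ∀ i, α i} {r : ℝ} (hr : 0 < r) (hμ : ∀ i, 0 < μ i (ball (x i) r)) :
    0 < Measure.pi μ (ball x r) := by
  rw [pi_ball μ x hr]
  exact CanonicallyOrderedAdd.prod_pos.mpr fun i _ => hμ i

end MeasureTheory.Measure

noncomputable def edgeProbs (V H R : ℕ)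
    (ZW : (EdgeIdx V → ℝ) × (Fin H → (Fin V → Fin R → ℝ) × (Fin R → ℝ))) :
    Fin H → EdgeIdx V → ℝ :=
  fun h l => Real.sigmoid (ZW.1 l +
    (of (ZW.2 h).1 * diagonal (ZW.2 h).2 * (of (ZW.2 h).1)ᵀ) l.1.1 l.1.2)

lemma continuous_edgeProbs (V H R : ℕ) : Continuous (edgeProbs V H R) := by
  unfold edgeProbs
  fun_prop

lemma exists_edgeProbs_eq {V H R : ℕ} (hR : V ≤ R) (π₀ : Fin H → EdgeIdx V → ℝ)
    (hπ₀ : ∀ h l, π₀ h l ∈ Set.Ioo 0 1) :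
    ∃ X₀ : Fin H → Fin V → Fin R → ℝ, edgeProbs V H R (0, fun h => (X₀ h, fun _ => 1)) = π₀ := by
  choose X₀ hX₀ using fun h => exists_sigmoid_mul_transpose_apply_eq hR (π₀ h) (hπ₀ h)
  refine ⟨X₀, funext₂ fun h l => ?_⟩
  simp only [edgeProbs, Pi.zero_apply, zero_add, diagonal_one, Matrix.mul_one]
  exact hX₀ h l

theorem induced_prior_full_support_general (V : ℕ) (H R : ℕ)
    (hR : V ≤ R)
    (PZ : Measure (EdgeIdx V → ℝ))
    (PX : Measure (Fin V → Fin R → ℝ)) [IsProbabilityMeasure PX]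
    (Plam : Measure (Fin R → ℝ)) [IsProbabilityMeasure Plam]
    -- full `L1` support of `Π_Z`
    (hZ : ∀ (Z0 : EdgeIdx V → ℝ) (ε : ℝ), 0 < ε →
      0 < PZ {Z | ∑ l, |Z l - Z0 l| < ε})
    -- full `L1` support of `Π_X`
    (hX : ∀ (X0 : Fin V → Fin R → ℝ) (ε : ℝ), 0 < ε →
      0 < PX {X | ∑ v, ∑ r, |X v r - X0 v r| < ε})
    -- full `L1` support of `Π_λ` on the nonnegative orthant
    (hlam : ∀ (lam0 : Fin R → ℝ), (∀ r, 0 ≤ lam0 r) → ∀ ε : ℝ, 0 < ε →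
      0 < Plam {lam | ∑ r, |lam r - lam0 r| < ε})
    -- the target collection of edge probability vectors
    (π0 : Fin H → EdgeIdx V → ℝ) (hπ0 : ∀ h l, π0 h l ∈ Set.Ioo (0 : ℝ) 1)
    (επ : ℝ) (hεπ : 0 < επ) :
    0 < ((PZ.prod (Measure.pi (fun _ : Fin H => PX.prod Plam))).map
          (fun ZW : (EdgeIdx V → ℝ) × (Fin H → (Fin V → Fin R → ℝ) × (Fin R → ℝ)) =>
            fun (h : Fin H) (l : EdgeIdx V) =>
              1 / (1 + Real.exp (-(ZW.1 l +
                (Matrix.of (ZW.2 h).1 * Matrix.diagonal (ZW.2 h).2 *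
                  (Matrix.of (ZW.2 h).1)ᵀ) l.1.1 l.1.2)))))
        {π : Fin H → EdgeIdx V → ℝ | ∑ h, ∑ l, |π h l - π0 h l| < επ} := by
  simp only [one_div, ← Real.sigmoid_def]
  change 0 < Measure.map (edgeProbs V H R) _ _
  set T := {π : Fin H → EdgeIdx V → ℝ | ∑ h, ∑ l, |π h l - π0 h l| < επ}
  have hT : IsOpen T := isOpen_lt (by fun_prop) continuous_const
  obtain ⟨X₀, hX₀⟩ := exists_edgeProbs_eq hR π0 hπ0
  have hpre : edgeProbs V H R ⁻¹' T ∈ 𝓝 (0, fun h => (X₀ h, fun _ => 1)) :=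
    (hT.preimage (continuous_edgeProbs V H R)).mem_nhds (by simpa [T, hX₀] using hεπ)
  obtain ⟨δ, hδ, hball⟩ := Metric.mem_nhds_iff.mp hpre
  rw [Measure.map_apply (continuous_edgeProbs V H R).measurable hT.measurableSet]
  refine lt_of_lt_of_le ?_ (measure_mono hball)
  refine Measure.prod_ball_pos ?_ (Measure.pi_ball_pos hδ fun h => Measure.prod_ball_pos ?_ ?_)
  · exact (hZ 0 δ hδ).trans_le (measure_mono (setOf_sum_abs_sub_lt_subset_ball _ δ))
  · exact (hX (X₀ h) δ hδ).trans_le (measure_mono (setOf_sum_sum_abs_sub_lt_subset_ball _ δ))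
  · exact (hlam (fun _ => 1) (fun _ => zero_le_one) δ hδ).trans_le
      (measure_mono (setOf_sum_abs_sub_lt_subset_ball _ δ))

/-- **Lemma 3.2**: if `Π_Z`, `Π_X` and `Π_λ` have full `L1` support on `ℝ^N`, `ℝ^{V×R}` and
`ℝ_{≥0}^R` respectively, and `R ≥ V`, then the induced prior `Π_π` on the class-specific edge
probability vectors — the joint law of `(π^{(1)},…,π^{(H)})` with
`π^{(h)}_l = σ(Z_l + L(X^{(h)} Λ^{(h)} X^{(h)T})_l)`, where `Z ∼ Π_Z` and the pairs
`(X^{(h)}, λ^{(h)}) ∼ Π_X ⊗ Π_λ` are independent across `h` and of `Z` — assigns positive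
mass to every `L1` neighborhood of any collection of vectors in `((0,1)^N)^H`. -/
theorem induced_prior_full_support (V : ℕ) (hV : 2 ≤ V) (H R : ℕ) (hH : 1 ≤ H)
    (hR : V ≤ R)
    (PZ : Measure (EdgeIdx V → ℝ)) [IsProbabilityMeasure PZ]
    (PX : Measure (Fin V → Fin R → ℝ)) [IsProbabilityMeasure PX]
    (Plam : Measure (Fin R → ℝ)) [IsProbabilityMeasure Plam]
    -- `Π_λ` is a measure on the nonnegative orthant
    (hPlamsupp : Plam {lam | ∀ r, 0 ≤ lam r} = 1)
    -- full `L1` support of `Π_Z`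
    (hZ : ∀ (Z0 : EdgeIdx V → ℝ) (ε : ℝ), 0 < ε →
      0 < PZ {Z | ∑ l, |Z l - Z0 l| < ε})
    -- full `L1` support of `Π_X`
    (hX : ∀ (X0 : Fin V → Fin R → ℝ) (ε : ℝ), 0 < ε →
      0 < PX {X | ∑ v, ∑ r, |X v r - X0 v r| < ε})
    -- full `L1` support of `Π_λ` on the nonnegative orthant
    (hlam : ∀ (lam0 : Fin R → ℝ), (∀ r, 0 ≤ lam0 r) → ∀ ε : ℝ, 0 < ε →
      0 < Plam {lam | ∑ r, |lam r - lam0 r| < ε})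
    -- the target collection of edge probability vectors
    (π0 : Fin H → EdgeIdx V → ℝ) (hπ0 : ∀ h l, π0 h l ∈ Set.Ioo (0 : ℝ) 1)
    (επ : ℝ) (hεπ : 0 < επ) :
    0 < ((PZ.prod (Measure.pi (fun _ : Fin H => PX.prod Plam))).map
          (fun ZW : (EdgeIdx V → ℝ) × (Fin H → (Fin V → Fin R → ℝ) × (Fin R → ℝ)) =>
            fun (h : Fin H) (l : EdgeIdx V) =>
              1 / (1 + Real.exp (-(ZW.1 l +
                (Matrix.of (ZW.2 h).1 * Matrix.diagonal (ZW.2 h).2 *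
                  (Matrix.of (ZW.2 h).1)ᵀ) l.1.1 l.1.2)))))
        {π : Fin H → EdgeIdx V → ℝ | ∑ h, ∑ l, |π h l - π0 h l| < επ} :=
  induced_prior_full_support_general V H R hR PZ PX Plam hZ hX hlam π0 hπ0 επ hεπ
end

section
/- Let R ≥ 1 and a_1 > 0, a_2 > 0. Let θ_1, θ_2, …, θ_R be independent real random variables with θ_1 ∼ Gamma(a_1, 1) and θ_m ∼ Gamma(a_2, 1) for m = 2,…,R, and define λ_r = ∏_{m=1}^{r} θ_m^{−1} for r = 1,…,R (the MIG(a_1,a_2) random vector). Then the law of λ = (λ_1,…,λ_R) has full L1 support on ℝ_{≥0}^R: for every λ^0 ∈ ℝ^R with nonnegative entries and every ε > 0, P(Σ_{r=1}^R |λ_r − λ^0_r| < ε) > 0. -/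
/-!
Shift the target to the strictly positive vector `λ* = λ⁰ + δ` with `R δ < ε`. The map
`θ ↦ (∏_{m ≤ r} θ_m⁻¹)_r` is onto the positive orthant (take `θ*_1 = 1 / λ*_1` and
`θ*_r = λ*_{r-1} / λ*_r`) and continuous at `θ*`, so a small box around `θ*` is mapped into the
`ε`-neighbourhood of `λ⁰`. Each `θ_r` falls into its side of the box with positive probability, since
gamma densities are positive on `(0, ∞)`, and by independence so does the whole vector.
-/

open MeasureTheory ProbabilityTheory Finset Topology

lemma gammaMeasure_pos_of_isOpen {a r : ℝ} (ha : 0 < a) (hr : 0 < r) {U : Set ℝ}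
    (hU : IsOpen U) (hUpos : (U ∩ Set.Ioi 0).Nonempty) : 0 < gammaMeasure a r U := by
  rw [gammaMeasure, withDensity_apply' _ U,
    setLIntegral_pos_iff (f := gammaPDF a r) (measurable_gammaPDFReal a r).ennreal_ofReal]
  refine (hU.inter isOpen_Ioi).measure_pos volume hUpos |>.trans_le (measure_mono ?_)
  rintro x ⟨hxU, hx⟩
  refine ⟨?_, hxU⟩
  simpa [gammaPDF, Function.mem_support] using gammaPDFReal_pos ha hr hx

namespace ProbabilityTheory.iIndepFun

variable {Ω ι E : Type*} [MeasurableSpace Ω] [MeasurableSpace E] {P : Measure Ω} [Fintype ι]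
  {X : ι → Ω → E}

theorem measure_iInter_preimage_pos (hX : iIndepFun X P) {S : ι → Set E}
    (hS : ∀ i, MeasurableSet (S i)) (hpos : ∀ i, 0 < P (X i ⁻¹' S i)) :
    0 < P (⋂ i, X i ⁻¹' S i) := by
  rw [hX.meas_iInter fun i => ⟨S i, hS i, rfl⟩]
  exact CanonicallyOrderedAdd.prod_pos.mpr fun i _ => hpos i

theorem measure_preimage_pos_of_mem_nhds [PseudoMetricSpace E] [OpensMeasurableSpace E]
    (hX : iIndepFun X P) {x : ι → E} (hx : ∀ i, ∀ η > 0, 0 < P (X i ⁻¹' Metric.ball (x i) η))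
    {U : Set (ι → E)} (hU : U ∈ 𝓝 x) :
    0 < P {ω | (fun i => X i ω) ∈ U} := by
  obtain ⟨η, hη, hball⟩ := Metric.mem_nhds_iff.mp hU
  refine (hX.measure_iInter_preimage_pos (fun i => Metric.isOpen_ball.measurableSet)
    fun i => hx i η hη).trans_le (measure_mono fun ω hω => hball ?_)
  rw [ball_pi x hη]
  simpa using hω

end ProbabilityTheory.iIndepFun

lemma prod_range_succ_div_eq {K : Type*} [Field K] {f : ℕ → K} (hf : ∀ i, f i ≠ 0) (n : ℕ) :
    ∏ i ∈ range n, f (i + 1) / f i = f n / f 0 := by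
  simpa using congrArg Units.val (prod_range_div (fun i => Units.mk0 (f i) (hf i)) n)

lemma Fin.prod_Iic_eq_prod_range {M : Type*} [CommMonoid M] {n : ℕ} (f : ℕ → M) (r : Fin n) :
    ∏ m ∈ Iic r, f m = ∏ k ∈ range (r + 1), f k := by
  rw [Nat.range_succ_eq_Iic, ← Fin.map_valEmbedding_Iic, prod_map]
  rfl

noncomputable def partialProdInv {n : ℕ} (t : Fin n → ℝ) (r : Fin n) : ℝ :=
  ∏ m ∈ Iic r, (t m)⁻¹

lemma exists_pos_partialProdInv_eq {n : ℕ} {lam : Fin n → ℝ} (hlam : ∀ r, 0 < lam r) :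
    ∃ t : Fin n → ℝ, (∀ m, 0 < t m) ∧ partialProdInv t = lam := by
  -- `g = (1, lam 0, lam 1, …)` padded with ones, and `t m = g m / g (m + 1)` telescopes
  set g : ℕ → ℝ := fun k =>
    if k = 0 then 1 else if h : k - 1 < n then lam ⟨k - 1, h⟩ else 1
  have hg : ∀ k, 0 < g k := by
    intro k
    simp only [g]
    split_ifs <;> simp [hlam]
  refine ⟨fun m => g m / g (m + 1), fun m => div_pos (hg _) (hg _), funext fun r => ?_⟩
  simp only [partialProdInv, inv_div]
  rw [Fin.prod_Iic_eq_prod_range (fun k => g (k + 1) / g k),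
    prod_range_succ_div_eq (fun k => (hg k).ne')]
  simp [g]

lemma continuousAt_partialProdInv {n : ℕ} {t : Fin n → ℝ} (ht : ∀ m, t m ≠ 0) :
    ContinuousAt partialProdInv t :=
  continuousAt_pi.mpr fun _ =>
    tendsto_finsetProd _ fun m _ => (continuous_apply m).continuousAt.inv₀ (ht m)

/-- **Lemma 3.3**: the multiplicative inverse gamma random vector
`λ_r = ∏_{m=1}^r θ_m⁻¹`, with `θ_1 ∼ Gamma(a_1,1)` and `θ_m ∼ Gamma(a_2,1)` for `m > 1`
all independent, has full `L1` support on the nonnegative orthant `ℝ_{≥0}^R`. -/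
theorem mig_full_support {Ω : Type*} [MeasurableSpace Ω]
    (P : Measure Ω) [IsProbabilityMeasure P]
    (R : ℕ) (hR : 1 ≤ R) (a1 a2 : ℝ) (ha1 : 0 < a1) (ha2 : 0 < a2)
    (θ : Fin R → Ω → ℝ) (hmeas : ∀ r, Measurable (θ r))
    (hindep : iIndepFun θ P)
    (hlaw1 : P.map (θ ⟨0, hR⟩) = gammaMeasure a1 1)
    (hlawm : ∀ r : Fin R, 0 < (r : ℕ) → P.map (θ r) = gammaMeasure a2 1)
    (lam0 : Fin R → ℝ) (hlam0 : ∀ r, 0 ≤ lam0 r) (ε : ℝ) (hε : 0 < ε) :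
    0 < P {ω | ∑ r, |(∏ m ∈ Finset.Iic r, (θ m ω)⁻¹) - lam0 r| < ε} := by
  set δ : ℝ := ε / (R + 1)
  have hδ : 0 < δ := by positivity
  obtain ⟨t, ht, hlam⟩ := exists_pos_partialProdInv_eq (lam := fun r => lam0 r + δ)
    fun r => by linarith [hlam0 r]
  set F : (Fin R → ℝ) → ℝ := fun x => ∑ r, |x r - lam0 r|
  have hFt : F (partialProdInv t) < ε := by
    have hRδ : (R : ℝ) * δ < ε := by
      rw [mul_div_assoc', div_lt_iff₀ (by positivity)]
      linarith
    simpa [F, hlam, abs_of_pos hδ] using hRδ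
  have hnhds : {s | F (partialProdInv s) < ε} ∈ 𝓝 t :=
    ((by fun_prop : Continuous F).continuousAt.comp
      (continuousAt_partialProdInv fun m => (ht m).ne')).preimage_mem_nhds (Iio_mem_nhds hFt)
  have hlaw : ∀ r, ∃ a, 0 < a ∧ P.map (θ r) = gammaMeasure a 1 := by
    intro r
    rcases Nat.eq_zero_or_pos r with h0 | hpos
    · obtain rfl : r = ⟨0, hR⟩ := Fin.ext h0
      exact ⟨a1, ha1, hlaw1⟩
    · exact ⟨a2, ha2, hlawm r hpos⟩
  refine hindep.measure_preimage_pos_of_mem_nhds (fun r η hη => ?_) hnhds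
  obtain ⟨a, ha, hθr⟩ := hlaw r
  rw [← Measure.map_apply (hmeas r) measurableSet_ball, hθr]
  exact gammaMeasure_pos_of_isOpen ha one_pos Metric.isOpen_ball
    ⟨t r, Metric.mem_ball_self hη, ht r⟩
end

section
/- Let V ≥ 2 and N = V(V−1)/2. For every π ∈ (0,1)^N there exist a matrix X ∈ ℝ^{V×V} and a diagonal V×V matrix Λ with nonnegative diagonal entries such that π_l = 1/(1 + exp(−(XΛX^T)_{vu})) for every pair 1 ≤ u < v ≤ V with index l = l(v,u). -/
/-!
Write each target probability as `σ(aₗ)` for its logit `aₗ`. For `c : ℝ` and `i ≠ j`, the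
rank-one matrix `|c| wwᵀ` with `w = sign c • eᵢ + eⱼ` is positive semidefinite, has entry `c` at
`(i, j)` and vanishes at every other off-diagonal position except `(j, i)`; summing these over the
pairs `u < v` gives a positive semidefinite matrix whose strictly lower entries are the logits.
Its spectral decomposition `U diag(λ) Uᵀ`, with `λ ≥ 0`, provides `X` and `Λ`.
-/

open Matrix

namespace Matrix

section EdgeMatrix

variable {n : Type*} [DecidableEq n]

noncomputable def psdEdgeMatrix (i j : n) (c : ℝ) : Matrix n n ℝ :=
  |c| • vecMulVec (Pi.single i (SignType.sign c : ℝ) + Pi.single j 1)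
    (Pi.single i (SignType.sign c : ℝ) + Pi.single j 1)

theorem psdEdgeMatrix_posSemidef [Fintype n] (i j : n) (c : ℝ) :
    (psdEdgeMatrix i j c).PosSemidef := by
  have h := posSemidef_vecMulVec_self_star
    (Pi.single i (SignType.sign c : ℝ) + Pi.single j 1 : n → ℝ)
  rw [star_trivial] at h
  exact h.smul (abs_nonneg c)

theorem psdEdgeMatrix_apply_self {i j : n} (hij : i ≠ j) (c : ℝ) :
    psdEdgeMatrix i j c i j = c := by
  rw [psdEdgeMatrix, smul_apply, vecMulVec_apply]
  simp [hij]

theorem psdEdgeMatrix_apply_of_ne {i j k l : n} (hkl : k ≠ l) (h : s(k, l) ≠ s(i, j))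
    (c : ℝ) : psdEdgeMatrix i j c k l = 0 := by
  rw [Ne, Sym2.eq_iff] at h
  rw [psdEdgeMatrix, smul_apply, vecMulVec_apply, smul_eq_mul]
  simp only [Pi.add_apply, Pi.single_apply]
  grind

end EdgeMatrix

theorem exists_posSemidef_strictLower_completion {n : Type*} [Fintype n] [LinearOrder n]
    (a : {p : n × n // p.2 < p.1} → ℝ) :
    ∃ M : Matrix n n ℝ, M.PosSemidef ∧ ∀ q, M q.1.1 q.1.2 = a q := by
  refine ⟨∑ p, psdEdgeMatrix p.1.1 p.1.2 (a p),
    posSemidef_sum _ fun p _ => psdEdgeMatrix_posSemidef _ _ _, fun q => ?_⟩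
  rw [Matrix.sum_apply, Finset.sum_eq_single q]
  · exact psdEdgeMatrix_apply_self q.2.ne' _
  · intro p _ hpq
    refine psdEdgeMatrix_apply_of_ne q.2.ne' ?_ _
    rw [Ne, Sym2.eq_iff]
    rintro (⟨h1, h2⟩ | ⟨h1, h2⟩)
    · exact hpq (Subtype.ext (Prod.ext h1.symm h2.symm))
    · exact (q.2.trans (h2 ▸ h1 ▸ p.2)).false
  · simp

theorem PosSemidef.exists_eq_mul_diagonal_mul_transpose {n : Type*} [Fintype n]
    [DecidableEq n] {M : Matrix n n ℝ} (hM : M.PosSemidef) :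
    ∃ (X : Matrix n n ℝ) (lam : n → ℝ), (∀ i, 0 ≤ lam i) ∧ M = X * diagonal lam * Xᵀ := by
  refine ⟨hM.isHermitian.eigenvectorUnitary, hM.isHermitian.eigenvalues,
    hM.eigenvalues_nonneg, ?_⟩
  conv_lhs => rw [hM.isHermitian.spectral_theorem]
  simp [Unitary.conjStarAlgAut_apply, star_eq_conjTranspose]

end Matrix

theorem lowrank_logistic_surjective_general (V : ℕ) (π : EdgeIdx V → ℝ)
    (hπ : ∀ q, π q ∈ Set.Ioo (0 : ℝ) 1) :
    ∃ (X : Matrix (Fin V) (Fin V) ℝ) (lam : Fin V → ℝ),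
      (∀ r, 0 ≤ lam r) ∧
      ∀ q : EdgeIdx V,
        π q = 1 / (1 + Real.exp (-((X * Matrix.diagonal lam * Xᵀ) q.1.1 q.1.2))) := by
  choose logit hlogit using fun q => (Real.range_sigmoid ▸ hπ q : π q ∈ Set.range Real.sigmoid)
  obtain ⟨M, hM, hMlogit⟩ := exists_posSemidef_strictLower_completion logit
  obtain ⟨X, lam, hlam, rfl⟩ := hM.exists_eq_mul_diagonal_mul_transpose
  refine ⟨X, lam, hlam, fun q => ?_⟩
  rw [hMlogit, one_div, ← Real.sigmoid_def, hlogit]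

/-- Surjectivity of the low-rank logistic factorization: every edge-probability vector
`π ∈ (0,1)^{V(V-1)/2}` arises as `π_l = σ((XΛXᵀ)_{vu})` for some latent coordinate matrix
`X ∈ ℝ^{V×V}` and diagonal matrix `Λ` with nonnegative diagonal entries. -/
theorem lowrank_logistic_surjective (V : ℕ) (hV : 2 ≤ V) (π : EdgeIdx V → ℝ)
    (hπ : ∀ q, π q ∈ Set.Ioo (0 : ℝ) 1) :
    ∃ (X : Matrix (Fin V) (Fin V) ℝ) (lam : Fin V → ℝ),
      (∀ r, 0 ≤ lam r) ∧
      ∀ q : EdgeIdx V,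
        π q = 1 / (1 + Real.exp (-((X * Matrix.diagonal lam * Xᵀ) q.1.1 q.1.2))) :=
  lowrank_logistic_surjective_general V π hπ
end

section
/- Let N ≥ 1, H ≥ 1, ν, ν' ∈ Δ_H, and π^{(h)}, π'^{(h)} ∈ [0,1]^N for h = 1,…,H. Then the L1 distance between the corresponding mixture pmfs satisfies Σ_{a∈{0,1}^N} |p_{ν,π}(a) − p_{ν',π'}(a)| ≤ Σ_{h=1}^H |ν_h − ν'_h| + 2 Σ_{h=1}^H ν'_h Σ_{l=1}^N |π^{(h)}_l − π'^{(h)}_l|. -/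
/-- The product-Bernoulli pmf on `{0,1}^N` with parameter `π`. -/
noncomputable def bernPMF {N : ℕ} (π : Fin N → ℝ) (a : Fin N → Bool) : ℝ :=
  ∏ l, if a l then π l else 1 - π l

/-- The mixture pmf `p_{ν,π}` on `{0,1}^N`. -/
noncomputable def mixPMF {N H : ℕ} (ν : Fin H → ℝ) (π : Fin H → Fin N → ℝ)
    (a : Fin N → Bool) : ℝ :=
  ∑ h, ν h * bernPMF (π h) a

lemma bern_nonneg {N : ℕ} {π : Fin N → ℝ} (h : ∀ l, π l ∈ Set.Icc (0:ℝ) 1)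
    (a : Fin N → Bool) : 0 ≤ bernPMF π a := by
  apply Finset.prod_nonneg
  intro l _
  rcases (h l) with ⟨h0, h1⟩
  by_cases hb : a l <;> simp [hb] <;> linarith

lemma bern_sum_one {N : ℕ} (π : Fin N → ℝ) : ∑ a : Fin N → Bool, bernPMF π a = 1 := by
  unfold bernPMF
  have h := Finset.prod_univ_sum (fun _ : Fin N => (Finset.univ : Finset Bool))
    (fun l b => if b then π l else 1 - π l)
  rw [Fintype.piFinset_univ] at h
  rw [← h]
  simp

lemma bern_cons {n : ℕ} (π : Fin (n+1) → ℝ) (b : Bool) (a : Fin n → Bool) :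
    bernPMF π (Fin.cons b a) = (if b then π 0 else 1 - π 0) * bernPMF (fun i => π i.succ) a := by
  unfold bernPMF
  rw [Fin.prod_univ_succ]
  simp

lemma sum_pi_succ {n : ℕ} (F : (Fin (n+1) → Bool) → ℝ) :
    ∑ a : Fin (n+1) → Bool, F a = ∑ b : Bool, ∑ a : Fin n → Bool, F (Fin.cons b a) := by
  rw [← (Fin.consEquiv (fun _ => Bool)).sum_comp, Fintype.sum_prod_type]
  simp [Fin.consEquiv]

lemma bern_L1 {n : ℕ} (π π' : Fin n → ℝ)
    (hπ : ∀ l, π l ∈ Set.Icc (0:ℝ) 1) (hπ' : ∀ l, π' l ∈ Set.Icc (0:ℝ) 1) :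
    ∑ a : Fin n → Bool, |bernPMF π a - bernPMF π' a| ≤ 2 * ∑ l, |π l - π' l| := by
  induction n with
  | zero => simp [bernPMF]
  | succ n ih =>
    rw [sum_pi_succ]
    have key : ∀ b : Bool, ∀ a : Fin n → Bool,
        |bernPMF π (Fin.cons b a) - bernPMF π' (Fin.cons b a)| ≤
          |(if b then π 0 else 1 - π 0) - (if b then π' 0 else 1 - π' 0)|
              * bernPMF (fun i => π i.succ) a
            + (if b then π' 0 else 1 - π' 0) * |bernPMF (fun i => π i.succ) a
              - bernPMF (fun i => π' i.succ) a| := by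
      intro b a
      rw [bern_cons, bern_cons]
      set g := (if b then π 0 else 1 - π 0)
      set g' := (if b then π' 0 else 1 - π' 0)
      set P := bernPMF (fun i => π i.succ) a
      set Q := bernPMF (fun i => π' i.succ) a
      have hP : 0 ≤ P := bern_nonneg (fun l => hπ l.succ) a
      have hg' : 0 ≤ g' := by
        rcases hπ' 0 with ⟨h0, h1⟩
        by_cases hb : b <;> simp [g', hb] <;> linarith
      calc |g * P - g' * Q| = |(g - g') * P + g' * (P - Q)| := by ring_nf
        _ ≤ |(g - g') * P| + |g' * (P - Q)| := abs_add_le _ _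
        _ = |g - g'| * P + g' * |P - Q| := by
            rw [abs_mul, abs_mul, abs_of_nonneg hP, abs_of_nonneg hg']
    have ihs := ih (fun i => π i.succ) (fun i => π' i.succ)
      (fun l => hπ l.succ) (fun l => hπ' l.succ)
    have hnn : (0:ℝ) ≤ ∑ a : Fin n → Bool, |bernPMF (fun i => π i.succ) a
        - bernPMF (fun i => π' i.succ) a| :=
      Finset.sum_nonneg fun a _ => abs_nonneg _
    calc ∑ b : Bool, ∑ a : Fin n → Bool, |bernPMF π (Fin.cons b a) - bernPMF π' (Fin.cons b a)|
        ≤ ∑ b : Bool, ∑ a : Fin n → Bool,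
            (|(if b then π 0 else 1 - π 0) - (if b then π' 0 else 1 - π' 0)|
              * bernPMF (fun i => π i.succ) a
            + (if b then π' 0 else 1 - π' 0) * |bernPMF (fun i => π i.succ) a
              - bernPMF (fun i => π' i.succ) a|) := by
          apply Finset.sum_le_sum; intro b _
          apply Finset.sum_le_sum; intro a _
          exact key b a
      _ = ∑ b : Bool, (|(if b then π 0 else 1 - π 0) - (if b then π' 0 else 1 - π' 0)| * 1
            + (if b then π' 0 else 1 - π' 0)
              * ∑ a : Fin n → Bool, |bernPMF (fun i => π i.succ) a
                  - bernPMF (fun i => π' i.succ) a|) := by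
          apply Finset.sum_congr rfl; intro b _
          rw [Finset.sum_add_distrib, ← Finset.mul_sum, ← Finset.mul_sum, bern_sum_one]
      _ ≤ 2 * |π 0 - π' 0| + 1 * (2 * ∑ l : Fin n, |π l.succ - π' l.succ|) := by
          rw [Fintype.sum_bool]
          have h1 : |(1 - π 0) - (1 - π' 0)| = |π 0 - π' 0| := by
            rw [show (1 - π 0) - (1 - π' 0) = -(π 0 - π' 0) by ring, abs_neg]
          simp only [if_true, Bool.false_eq_true, if_false, h1]
          have hs0 : (0:ℝ) ≤ π' 0 := (hπ' 0).1
          have hs1 : π' 0 ≤ 1 := (hπ' 0).2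
          nlinarith [abs_nonneg (π 0 - π' 0)]
      _ = 2 * ∑ l : Fin (n+1), |π l - π' l| := by
          rw [Fin.sum_univ_succ]; ring

/-- Quantitative `L1` continuity of the mixture pmf in its parameters, underlying the proof of
Theorem 3.1. -/
theorem mixture_L1_bound (N H : ℕ) (hN : 1 ≤ N) (hH : 1 ≤ H)
    (ν ν' : Fin H → ℝ)
    (hν0 : ∀ h, 0 ≤ ν h) (hν1 : ∀ h, ν h ≤ 1) (hνsum : ∑ h, ν h = 1)
    (hν'0 : ∀ h, 0 ≤ ν' h) (hν'1 : ∀ h, ν' h ≤ 1) (hν'sum : ∑ h, ν' h = 1)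
    (π π' : Fin H → Fin N → ℝ)
    (hπ : ∀ h l, π h l ∈ Set.Icc (0 : ℝ) 1) (hπ' : ∀ h l, π' h l ∈ Set.Icc (0 : ℝ) 1) :
    ∑ a : Fin N → Bool, |mixPMF ν π a - mixPMF ν' π' a|
      ≤ ∑ h, |ν h - ν' h| + 2 * ∑ h, ν' h * ∑ l, |π h l - π' h l| := by
  have key : ∀ a : Fin N → Bool, |mixPMF ν π a - mixPMF ν' π' a|
      ≤ ∑ h, (|ν h - ν' h| * bernPMF (π h) a
          + ν' h * |bernPMF (π h) a - bernPMF (π' h) a|) := by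
    intro a
    have : mixPMF ν π a - mixPMF ν' π' a
        = ∑ h, ((ν h - ν' h) * bernPMF (π h) a
            + ν' h * (bernPMF (π h) a - bernPMF (π' h) a)) := by
      unfold mixPMF
      rw [← Finset.sum_sub_distrib]
      apply Finset.sum_congr rfl; intro h _; ring
    rw [this]
    calc |∑ h, ((ν h - ν' h) * bernPMF (π h) a
            + ν' h * (bernPMF (π h) a - bernPMF (π' h) a))|
        ≤ ∑ h, |(ν h - ν' h) * bernPMF (π h) a
            + ν' h * (bernPMF (π h) a - bernPMF (π' h) a)| :=
          Finset.abs_sum_le_sum_abs _ _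
      _ ≤ ∑ h, (|ν h - ν' h| * bernPMF (π h) a
            + ν' h * |bernPMF (π h) a - bernPMF (π' h) a|) := by
          apply Finset.sum_le_sum; intro h _
          calc |(ν h - ν' h) * bernPMF (π h) a
              + ν' h * (bernPMF (π h) a - bernPMF (π' h) a)|
              ≤ |(ν h - ν' h) * bernPMF (π h) a|
                + |ν' h * (bernPMF (π h) a - bernPMF (π' h) a)| := abs_add_le _ _
            _ = |ν h - ν' h| * bernPMF (π h) a
                + ν' h * |bernPMF (π h) a - bernPMF (π' h) a| := by
                rw [abs_mul, abs_mul, abs_of_nonneg (bern_nonneg (hπ h) a),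
                  abs_of_nonneg (hν'0 h)]
  calc ∑ a : Fin N → Bool, |mixPMF ν π a - mixPMF ν' π' a|
      ≤ ∑ a : Fin N → Bool, ∑ h, (|ν h - ν' h| * bernPMF (π h) a
          + ν' h * |bernPMF (π h) a - bernPMF (π' h) a|) :=
        Finset.sum_le_sum fun a _ => key a
    _ = ∑ h, (|ν h - ν' h| * 1
          + ν' h * ∑ a : Fin N → Bool, |bernPMF (π h) a - bernPMF (π' h) a|) := by
        rw [Finset.sum_comm]
        apply Finset.sum_congr rfl; intro h _
        rw [Finset.sum_add_distrib, ← Finset.mul_sum, ← Finset.mul_sum, bern_sum_one]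
    _ ≤ ∑ h, (|ν h - ν' h| + ν' h * (2 * ∑ l, |π h l - π' h l|)) := by
        apply Finset.sum_le_sum; intro h _
        have := bern_L1 (π h) (π' h) (hπ h) (hπ' h)
        have h0 := hν'0 h
        nlinarith
    _ = ∑ h, |ν h - ν' h| + 2 * ∑ h, ν' h * ∑ l, |π h l - π' h l| := by
        rw [Finset.sum_add_distrib, Finset.mul_sum]
        congr 1
        apply Finset.sum_congr rfl; intro h _; ring
end

section
/- Let S be a nonempty finite set and let P(S) ⊂ ℝ^S denote the simplex of probability mass functions on S, with its Borel σ-algebra. Let Π be a Borel probability measure on P(S), and let p^0 ∈ P(S) satisfy Π{p ∈ P(S) : Σ_{s∈S} |p(s) − p^0(s)| < ε} > 0 for every ε > 0. Let X_1, X_2, … be i.i.d. S-valued random variables with law p^0, and for n ≥ 1 define the posterior Π_n(A) = (∫_A ∏_{i=1}^n p(X_i) Π(dp)) / (∫_{P(S)} ∏_{i=1}^n p(X_i) Π(dp)) for Borel A ⊆ P(S). Then for every ε > 0, with probability one, Π_n{p : Σ_{s∈S} |p(s) − p^0(s)| < ε} → 1 as n → ∞. -/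
/-!
The likelihood of `p` after `n` observations factors as `L_n(p₀) · R_n(p)ⁿ` with
`R_n(p) = ∏_{p₀ s > 0} (p s / p₀ s) ^ q_n(s)`, where `q_n` is the empirical frequency.
At `q = p₀` weighted AM-GM (Gibbs' inequality) gives `R(p) < 1` for every pmf `p ≠ p₀`;
by compactness of the pmfs at `L1` distance `≥ ε` and continuity of `R` in `(q, p)`,
there is `c < 1` with `R ≤ c` on that set for all `q` near `p₀`, hence for `q_n` eventually,
by the strong law. On a small `L1` ball around `p₀`, which has positive prior mass, the
likelihood is at least `rⁿ L_n(p₀)` for a fixed `r ∈ (c, 1)`, so the posterior mass outside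
the `ε`-ball is `O((c / r)ⁿ)`.
-/

open MeasureTheory ProbabilityTheory Filter Finset Topology

noncomputable section

variable {S : Type*}

def likelihood (x : ℕ → S) (n : ℕ) (p : S → ℝ) : ℝ := ∏ i ∈ range n, p (x i)

def empiricalFreq [DecidableEq S] (x : ℕ → S) (n : ℕ) (s : S) : ℝ := #{i ∈ range n | x i = s} / n

/-- With `q = empiricalFreq x n`, its `n`-th power is `likelihood x n p / likelihood x n p0`. -/
def meanLikelihoodRatio [Fintype S] (p0 q p : S → ℝ) : ℝ := ∏ s with 0 < p0 s, (p s / p0 s) ^ q s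

lemma prod_range_comp_eq_prod_pow_card [DecidableEq S] {M : Type*} [CommMonoid M] (f : S → M)
    {x : ℕ → S} {T : Finset S} (hx : ∀ i, x i ∈ T) (n : ℕ) :
    ∏ i ∈ range n, f (x i) = ∏ s ∈ T, f s ^ #{i ∈ range n | x i = s} := by
  rw [← prod_fiberwise_of_maps_to (fun i _ => hx i)]
  exact prod_congr rfl fun s _ => prod_congr rfl (fun i hi => by rw [(mem_filter.1 hi).2]) |>.trans
    (prod_const _)

lemma likelihood_eq_mul_meanLikelihoodRatio_pow [Fintype S] [DecidableEq S] {p0 p : S → ℝ}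
    (hp : ∀ s, 0 ≤ p s) {x : ℕ → S} (hx : ∀ i, 0 < p0 (x i)) (n : ℕ) :
    likelihood x n p = likelihood x n p0 * meanLikelihoodRatio p0 (empiricalFreq x n) p ^ n := by
  have hxT : ∀ i, x i ∈ ({s | 0 < p0 s} : Finset S) := by simpa using hx
  have hpow : ∀ s ∈ ({s | 0 < p0 s} : Finset S), p0 s ^ #{i ∈ range n | x i = s} *
      ((p s / p0 s) ^ empiricalFreq x n s) ^ n = p s ^ #{i ∈ range n | x i = s} := by
    intro s hs
    have hs : 0 < p0 s := (mem_filter.1 hs).2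
    rcases n.eq_zero_or_pos with rfl | hn
    · simp
    rw [← Real.rpow_natCast _ n, ← Real.rpow_mul (div_nonneg (hp s) hs.le), empiricalFreq,
      div_mul_cancel₀ _ (by positivity), Real.rpow_natCast, ← mul_pow, mul_div_cancel₀ _ hs.ne']
  simp only [likelihood, meanLikelihoodRatio, prod_range_comp_eq_prod_pow_card _ hxT, ← prod_pow,
    ← prod_mul_distrib]
  exact (prod_congr rfl hpow).symm

lemma likelihood_le_pow_mul [Fintype S] [DecidableEq S] {p0 p : S → ℝ} (hp : ∀ s, 0 ≤ p s)
    {x : ℕ → S} (hx : ∀ i, 0 < p0 (x i)) {n : ℕ} {c : ℝ}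
    (hc : meanLikelihoodRatio p0 (empiricalFreq x n) p ≤ c) :
    likelihood x n p ≤ c ^ n * likelihood x n p0 := by
  have hR : 0 ≤ meanLikelihoodRatio p0 (empiricalFreq x n) p :=
    prod_nonneg fun s hs => Real.rpow_nonneg (div_nonneg (hp s) (mem_filter.1 hs).2.le) _
  rw [likelihood_eq_mul_meanLikelihoodRatio_pow hp hx, mul_comm]
  exact mul_le_mul_of_nonneg_right (pow_le_pow_left₀ hR hc n)
    (prod_nonneg fun i _ => (hx i).le)

lemma pow_mul_likelihood_le {p0 p : S → ℝ} {r : ℝ} (hr : 0 ≤ r)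
    (hrp : ∀ s, 0 < p0 s → r * p0 s ≤ p s) {x : ℕ → S} (hx : ∀ i, 0 < p0 (x i)) (n : ℕ) :
    r ^ n * likelihood x n p0 ≤ likelihood x n p := by
  rw [likelihood, likelihood, ← card_range n, ← prod_const, card_range, ← prod_mul_distrib]
  exact prod_le_prod (fun i _ => mul_nonneg hr (hx i).le) fun i _ => hrp _ (hx i)

/-- Weighted AM-GM bounds the ratio by `∑_{p0 s > 0} p s ≤ 1`; equality would force every
ratio `p s / p0 s` to equal that sum, but one of them is `< 1` since `p ≠ p0`. -/
lemma meanLikelihoodRatio_self_lt_one [Fintype S] {p0 p : S → ℝ} (hp0 : p0 ∈ stdSimplex ℝ S)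
    (hp : p ∈ stdSimplex ℝ S) (hne : p ≠ p0) : meanLikelihoodRatio p0 p0 p < 1 := by
  set T : Finset S := {s | 0 < p0 s}
  have hT : ∀ s ∈ T, 0 < p0 s := fun s hs => (mem_filter.1 hs).2
  have hwsum : ∑ s ∈ T, p0 s = 1 :=
    (sum_filter_of_ne fun s _ h => (hp0.1 s).lt_of_ne' h).trans hp0.2
  have hz : ∀ s ∈ T, 0 ≤ p s / p0 s := fun s hs => div_nonneg (hp.1 s) (hT s hs).le
  have hmean : ∑ s ∈ T, p0 s * (p s / p0 s) = ∑ s ∈ T, p s :=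
    sum_congr rfl fun s hs => mul_div_cancel₀ _ (hT s hs).ne'
  have hM : ∑ s ∈ T, p s ≤ 1 :=
    hp.2 ▸ sum_le_sum_of_subset_of_nonneg (subset_univ T) fun s _ _ => hp.1 s
  have hamgm := Real.geom_mean_le_arith_mean_weighted T p0 (fun s => p s / p0 s)
    (fun s hs => (hT s hs).le) hwsum hz
  obtain ⟨s₀, hs₀⟩ : ∃ s, p s < p0 s := by
    by_contra! hle
    exact hne (funext fun s => ((sum_eq_sum_iff_of_le fun s _ => hle s).1
      (hp0.2.trans hp.2.symm) s (mem_univ s)).symm)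
  have hs₀T : s₀ ∈ T := mem_filter.2 ⟨mem_univ _, (hp.1 s₀).trans_lt hs₀⟩
  have hz₀ : p s₀ / p0 s₀ < 1 := (div_lt_one (hT s₀ hs₀T)).2 hs₀
  rw [hmean] at hamgm
  by_cases hlt : meanLikelihoodRatio p0 p0 p < ∑ s ∈ T, p s
  · exact hlt.trans_le hM
  · have hconst := (Real.geom_mean_lt_arith_mean_weighted_iff_of_pos' T p0 (fun s => p s / p0 s)
      hT hwsum hz).not.1 (by rwa [hmean])
    push Not at hconst
    rw [hmean] at hconst
    exact hamgm.trans_lt (hconst s₀ hs₀T ▸ hz₀)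

end

section
variable {S : Type*} [Fintype S]

lemma continuousAt_meanLikelihoodRatio (p0 p : S → ℝ) :
    ContinuousAt (fun z : (S → ℝ) × (S → ℝ) => meanLikelihoodRatio p0 z.1 z.2) (p0, p) :=
  tendsto_finsetProd _ fun s hs =>
    ((continuous_apply s).comp continuous_snd |>.div_const _).continuousAt.rpow
      ((continuous_apply s).comp continuous_fst).continuousAt (Or.inr (mem_filter.1 hs).2)

lemma IsCompact.exists_lt_forall_lt {α : Type*} [TopologicalSpace α] {K : Set α}
    (hK : IsCompact K) {g : α → ℝ} (hg : ContinuousOn g K) {b : ℝ} (h : ∀ x ∈ K, g x < b) :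
    ∃ c < b, ∀ x ∈ K, g x < c := by
  rcases K.eq_empty_or_nonempty with rfl | hne
  · exact ⟨b - 1, by linarith, by simp⟩
  obtain ⟨x₀, hx₀, hmax⟩ := hK.exists_isMaxOn hne hg
  have hx₀b := h x₀ hx₀
  exact ⟨(g x₀ + b) / 2, by linarith, fun x hx => by linarith [isMaxOn_iff.1 hmax x hx]⟩

lemma exists_eventually_forall_meanLikelihoodRatio_lt {p0 : S → ℝ} (hp0 : p0 ∈ stdSimplex ℝ S)
    {K : Set (S → ℝ)} (hK : IsCompact K) (hKsub : K ⊆ stdSimplex ℝ S) (hp0K : p0 ∉ K) :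
    ∃ c, 0 ≤ c ∧ c < 1 ∧ ∀ᶠ q in 𝓝 p0, ∀ p ∈ K, meanLikelihoodRatio p0 q p < c := by
  have hcont : ContinuousOn (meanLikelihoodRatio p0 p0) K := fun p _ =>
    ((continuousAt_meanLikelihoodRatio p0 p).comp (Continuous.prodMk_right p0).continuousAt
      ).continuousWithinAt
  obtain ⟨c, hc1, hc⟩ := hK.exists_lt_forall_lt hcont fun p hp =>
    meanLikelihoodRatio_self_lt_one hp0 (hKsub hp) (ne_of_mem_of_not_mem hp hp0K)
  refine ⟨max c 0, le_max_right _ _, max_lt hc1 one_pos,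
    hK.eventually_forall_of_forall_eventually fun p hp => ?_⟩
  exact (continuousAt_meanLikelihoodRatio p0 p).eventually
    (gt_mem_nhds ((hc p hp).trans_le (le_max_left _ _)))

lemma isCompact_stdSimplex_inter_le_sum_abs_sub (p0 : S → ℝ) (ε : ℝ) :
    IsCompact (stdSimplex ℝ S ∩ {p | ε ≤ ∑ s, |p s - p0 s|}) :=
  (isCompact_stdSimplex ℝ S).inter_right (isClosed_le continuous_const (by fun_prop))

lemma exists_pos_setOf_sum_abs_sub_lt_subset {p0 : S → ℝ} {U : Set (S → ℝ)} (hU : U ∈ 𝓝 p0) :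
    ∃ δ > 0, {p | ∑ s, |p s - p0 s| < δ} ⊆ U := by
  obtain ⟨δ, hδ, hball⟩ := Metric.mem_nhds_iff.1 hU
  refine ⟨δ, hδ, fun p hp => hball (Metric.mem_ball.2 (lt_of_le_of_lt ?_ hp))⟩
  exact (dist_pi_le_iff (sum_nonneg fun _ _ => abs_nonneg _)).2 fun s => (Real.dist_eq _ _).le.trans
    (single_le_sum (f := fun s => |p s - p0 s|) (fun _ _ => abs_nonneg _) (mem_univ s))

lemma eventually_mul_le_of_lt_one (p0 : S → ℝ) {r : ℝ} (hr : r < 1) :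
    ∀ᶠ p in 𝓝 p0, ∀ s, 0 < p0 s → r * p0 s ≤ p s :=
  eventually_all.2 fun s => by
    by_cases hs : 0 < p0 s
    · exact ((continuous_apply s).continuousAt.eventually
        (lt_mem_nhds (by nlinarith : r * p0 s < p0 s))).mono fun p hp _ => hp.le
    · exact Eventually.of_forall fun _ h => absurd h hs

end

section
variable {α : Type*} [MeasurableSpace α] {μ : Measure α}

lemma setIntegral_div_integral_eq_one_sub {U : Set α} (hU : MeasurableSet U) {f : α → ℝ}
    (hf : Integrable f μ) (h : ∫ x, f x ∂μ ≠ 0) :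
    (∫ x in U, f x ∂μ) / ∫ x, f x ∂μ = 1 - (∫ x in Uᶜ, f x ∂μ) / ∫ x, f x ∂μ := by
  rw [eq_sub_iff_add_eq, ← add_div, integral_add_compl hU hf, div_self h]

theorem tendsto_setIntegral_div_integral_of_bounds [IsFiniteMeasure μ] {U V : Set α}
    (hU : MeasurableSet U) (hV : MeasurableSet V) (hμV : 0 < μ.real V) {f : ℕ → α → ℝ}
    (hf : ∀ n, Integrable (f n) μ) (hf0 : ∀ n x, 0 ≤ f n x) {a b : ℕ → ℝ} (ha0 : ∀ n, 0 ≤ a n)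
    (ha : ∀ᶠ n in atTop, ∀ x ∉ U, f n x ≤ a n) (hb : ∀ n, ∀ x ∈ V, b n ≤ f n x)
    (hb0 : ∀ n, 0 < b n) (hab : Tendsto (fun n => a n / b n) atTop (𝓝 0)) :
    Tendsto (fun n => (∫ x in U, f n x ∂μ) / ∫ x, f n x ∂μ) atTop (𝓝 1) := by
  have hlower : ∀ n, b n * μ.real V ≤ ∫ x, f n x ∂μ := fun n =>
    (setIntegral_ge_of_const_le_real hV (measure_ne_top _ _) (hb n) (hf n).integrableOn).trans
      (setIntegral_le_integral (hf n) (ae_of_all _ (hf0 n)))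
  have hpos : ∀ n, 0 < ∫ x, f n x ∂μ := fun n => (mul_pos (hb0 n) hμV).trans_le (hlower n)
  have hupper : ∀ᶠ n in atTop, ∫ x in Uᶜ, f n x ∂μ ≤ a n * μ.real Set.univ := ha.mono fun n hn =>
    calc ∫ x in Uᶜ, f n x ∂μ ≤ a n * μ.real Uᶜ :=
          (Real.le_norm_self _).trans <| norm_setIntegral_le_of_norm_le_const
            (measure_lt_top _ _) fun x hx => (Real.norm_of_nonneg (hf0 n x)).trans_le (hn x hx)
      _ ≤ a n * μ.real Set.univ :=
          mul_le_mul_of_nonneg_left (measureReal_mono (Set.subset_univ _) (measure_ne_top _ _))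
            (ha0 n)
  have hcompl : Tendsto (fun n => (∫ x in Uᶜ, f n x ∂μ) / ∫ x, f n x ∂μ) atTop (𝓝 0) := by
    refine squeeze_zero' (Eventually.of_forall fun n =>
      div_nonneg (setIntegral_nonneg hU.compl fun x _ => hf0 n x) (hpos n).le) ?_
      (by simpa using hab.const_mul (μ.real Set.univ / μ.real V))
    filter_upwards [hupper] with n hn
    calc (∫ x in Uᶜ, f n x ∂μ) / ∫ x, f n x ∂μ ≤ a n * μ.real Set.univ / (b n * μ.real V) :=
          div_le_div₀ (by positivity [ha0 n]) hn (mul_pos (hb0 n) hμV) (hlower n)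
      _ = μ.real Set.univ / μ.real V * (a n / b n) := by field_simp
  simpa [setIntegral_div_integral_eq_one_sub hU (hf _) (hpos _).ne'] using
    (tendsto_const_nhds (x := (1 : ℝ))).sub hcompl

end

section
variable {S : Type*} [Fintype S]

abbrev PMFSimplex (S : Type*) [Fintype S] :=
  {p : S → ℝ // (∀ s, 0 ≤ p s) ∧ (∀ s, p s ≤ 1) ∧ ∑ s, p s = 1}

lemma measurable_pmfSimplex_apply (s : S) : Measurable fun p : PMFSimplex S => p.1 s :=
  (measurable_pi_apply s).comp measurable_subtype_coe

lemma measurableSet_setOf_sum_abs_sub_lt (p0 : S → ℝ) (ε : ℝ) :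
    MeasurableSet {p : PMFSimplex S | ∑ s, |p.1 s - p0 s| < ε} :=
  measurableSet_lt (Finset.measurable_sum _ fun s _ =>
    ((measurable_pmfSimplex_apply s).sub_const _).abs) measurable_const

lemma integrable_likelihood (Pri : Measure (PMFSimplex S)) [IsFiniteMeasure Pri] (x : ℕ → S)
    (n : ℕ) : Integrable (fun p : PMFSimplex S => likelihood x n p.1) Pri := by
  refine (integrable_const (1 : ℝ)).mono' (Finset.measurable_prod _ fun i _ =>
    measurable_pmfSimplex_apply (x i)).aestronglyMeasurable (ae_of_all _ fun p => ?_)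
  rw [likelihood, Real.norm_of_nonneg (prod_nonneg fun i _ => p.2.1 _)]
  exact prod_le_one (fun i _ => p.2.1 _) fun i _ => p.2.2.1 _

theorem tendsto_posterior_of_tendsto_empiricalFreq [DecidableEq S]
    (Pri : Measure (PMFSimplex S)) [IsFiniteMeasure Pri] {p0 : S → ℝ}
    (hp0 : p0 ∈ stdSimplex ℝ S)
    (hsupp : ∀ ε : ℝ, 0 < ε → 0 < Pri {p | ∑ s, |p.1 s - p0 s| < ε})
    {x : ℕ → S} (hx : ∀ i, 0 < p0 (x i)) (hfreq : Tendsto (empiricalFreq x) atTop (𝓝 p0))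
    {ε : ℝ} (hε : 0 < ε) :
    Tendsto (fun n => (∫ p in {p | ∑ s, |p.1 s - p0 s| < ε}, likelihood x n p.1 ∂Pri) /
      ∫ p, likelihood x n p.1 ∂Pri) atTop (𝓝 1) := by
  obtain ⟨c, hc0, hc1, hfar⟩ := exists_eventually_forall_meanLikelihoodRatio_lt hp0
    (isCompact_stdSimplex_inter_le_sum_abs_sub p0 ε) Set.inter_subset_left (by simp [hε])
  obtain ⟨r, hcr, hr1⟩ := exists_between hc1
  have hr0 : 0 < r := hc0.trans_lt hcr
  obtain ⟨δ, hδ, hnear⟩ :=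
    exists_pos_setOf_sum_abs_sub_lt_subset (eventually_mul_le_of_lt_one p0 hr1)
  have hL0 : ∀ n, 0 < likelihood x n p0 := fun n => prod_pos fun i _ => hx i
  refine tendsto_setIntegral_div_integral_of_bounds (measurableSet_setOf_sum_abs_sub_lt p0 ε)
    (measurableSet_setOf_sum_abs_sub_lt p0 δ)
    (ENNReal.toReal_pos (hsupp δ hδ).ne' (measure_ne_top _ _)) (integrable_likelihood Pri x)
    (fun n p => prod_nonneg fun i _ => p.2.1 _) (a := fun n => c ^ n * likelihood x n p0)
    (b := fun n => r ^ n * likelihood x n p0) (fun n => by positivity [hL0 n]) ?_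
    (fun n p hp => pow_mul_likelihood_le hr0.le (hnear hp) hx n) (fun n => by positivity [hL0 n]) ?_
  · filter_upwards [hfreq.eventually hfar] with n hn p hp
    exact likelihood_le_pow_mul p.2.1 hx (hn p.1 ⟨⟨p.2.1, p.2.2.2⟩, not_lt.1 hp⟩).le
  · have hratio : ∀ n, c ^ n * likelihood x n p0 / (r ^ n * likelihood x n p0) = (c / r) ^ n :=
      fun n => by rw [mul_div_mul_right _ _ (hL0 n).ne', div_pow]
    simpa only [hratio] using tendsto_pow_atTop_nhds_zero_of_lt_one (by positivity)
      ((div_lt_one hr0).2 hcr)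

end

section
variable {S : Type*} {Ω : Type*} [MeasurableSpace Ω] {P : Measure Ω} {X : ℕ → Ω → S} {p0 : S → ℝ}

lemma ae_forall_pos_comp [Countable S]
    (hlaw : ∀ (i : ℕ) (s : S), P (X i ⁻¹' {s}) = ENNReal.ofReal (p0 s)) :
    ∀ᵐ ω ∂P, ∀ i, 0 < p0 (X i ω) := by
  refine ae_all_iff.2 fun i => ?_
  have hatom : ∀ s, ∀ᵐ ω ∂P, X i ω = s → 0 < p0 s := fun s => by
    by_cases hs : 0 < p0 s
    · exact Eventually.of_forall fun _ _ => hs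
    · have hnull : P (X i ⁻¹' {s}) = 0 := by rw [hlaw, ENNReal.ofReal_eq_zero.2 (not_lt.1 hs)]
      exact (measure_eq_zero_iff_ae_notMem.1 hnull).mono fun ω hω h => absurd h hω
  filter_upwards [ae_all_iff.2 hatom] with ω hω using hω _ rfl

lemma ae_tendsto_empiricalFreq [Fintype S] [DecidableEq S] [MeasurableSpace S]
    [MeasurableSingletonClass S] [IsProbabilityMeasure P]
    (hX : ∀ i, Measurable (X i)) (hindep : iIndepFun X P) (hp0 : ∀ s, 0 ≤ p0 s)
    (hlaw : ∀ (i : ℕ) (s : S), P (X i ⁻¹' {s}) = ENNReal.ofReal (p0 s)) :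
    ∀ᵐ ω ∂P, Tendsto (empiricalFreq fun i => X i ω) atTop (𝓝 p0) := by
  have hident : ∀ i, IdentDistrib (X i) (X 0) P P := fun i =>
    ⟨(hX i).aemeasurable, (hX 0).aemeasurable, Measure.ext_of_singleton fun s => by
      rw [Measure.map_apply (hX i) (measurableSet_singleton s),
        Measure.map_apply (hX 0) (measurableSet_singleton s), hlaw, hlaw]⟩
  have hcoord : ∀ s, ∀ᵐ ω ∂P, Tendsto (fun n => empiricalFreq (fun i => X i ω) n s) atTop
      (𝓝 (p0 s)) := fun s => by
    set f : S → ℝ := fun t => if t = s then 1 else 0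
    have hf : Measurable f := measurable_of_finite f
    have hmean : P[f ∘ X 0] = p0 s := by
      have hind : f ∘ X 0 = (X 0 ⁻¹' {s}).indicator 1 := by
        ext ω; by_cases h : X 0 ω = s <;> simp [f, h]
      rw [hind, integral_indicator_one ((hX 0) (measurableSet_singleton s)),
        measureReal_def, hlaw, ENNReal.toReal_ofReal (hp0 s)]
    have hslln := strong_law_ae_real (fun i => f ∘ X i)
      ((integrable_const (1 : ℝ)).mono' (hf.comp (hX 0)).aestronglyMeasurable
        (ae_of_all _ fun ω => by simp only [f, Function.comp_apply]; split_ifs <;> simp))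
      (fun i j hij => (hindep.indepFun hij).comp hf hf) fun i => (hident i).comp hf
    filter_upwards [hslln] with ω hω
    rw [hmean] at hω
    refine hω.congr fun n => ?_
    simp [empiricalFreq, f]
  filter_upwards [ae_all_iff.2 hcoord] with ω hω using tendsto_pi_nhds.2 hω

end

theorem posterior_consistency_general {S : Type*} [Fintype S]
    [MeasurableSpace S] [MeasurableSingletonClass S]
    (Pri : Measure {p : S → ℝ // (∀ s, 0 ≤ p s) ∧ (∀ s, p s ≤ 1) ∧ ∑ s, p s = 1})
    [IsProbabilityMeasure Pri]
    (p0 : S → ℝ) (hp00 : ∀ s, 0 ≤ p0 s)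
    (hp0sum : ∑ s, p0 s = 1)
    -- full `L1` prior support at `p⁰`
    (hsupp : ∀ ε : ℝ, 0 < ε → 0 < Pri {p | ∑ s, |p.1 s - p0 s| < ε})
    {Ω : Type*} [MeasurableSpace Ω] (P : Measure Ω) [IsProbabilityMeasure P]
    (X : ℕ → Ω → S) (hXmeas : ∀ i, Measurable (X i))
    (hindep : iIndepFun X P)
    (hlaw : ∀ (i : ℕ) (s : S), P (X i ⁻¹' {s}) = ENNReal.ofReal (p0 s))
    (ε : ℝ) (hε : 0 < ε) :
    ∀ᵐ ω ∂P, Tendsto (fun n : ℕ =>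
        (∫ p in {p | ∑ s, |p.1 s - p0 s| < ε},
            (∏ i ∈ Finset.range n, p.1 (X i ω)) ∂Pri) /
        (∫ p, (∏ i ∈ Finset.range n, p.1 (X i ω)) ∂Pri))
      atTop (nhds 1) := by
  classical
  filter_upwards [ae_forall_pos_comp hlaw, ae_tendsto_empiricalFreq hXmeas hindep hp00 hlaw]
    with ω hpos hfreq
  exact tendsto_posterior_of_tendsto_empiricalFreq Pri ⟨hp00, hp0sum⟩ hsupp hpos hfreq hε

/-- **Posterior consistency (Section 3)**: on a nonempty finite set `S`, if a prior `Π` on the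
simplex of pmfs gives positive mass to every `L1` neighborhood of the true pmf `p⁰`, and
`X₁, X₂, …` are i.i.d. with law `p⁰`, then for every `ε > 0`, almost surely the posterior mass
of the `L1` ball of radius `ε` around `p⁰` converges to `1`. -/
theorem posterior_consistency {S : Type*} [Fintype S] [Nonempty S]
    [MeasurableSpace S] [MeasurableSingletonClass S]
    (Pri : Measure {p : S → ℝ // (∀ s, 0 ≤ p s) ∧ (∀ s, p s ≤ 1) ∧ ∑ s, p s = 1})
    [IsProbabilityMeasure Pri]
    (p0 : S → ℝ) (hp00 : ∀ s, 0 ≤ p0 s) (hp01 : ∀ s, p0 s ≤ 1)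
    (hp0sum : ∑ s, p0 s = 1)
    -- full `L1` prior support at `p⁰`
    (hsupp : ∀ ε : ℝ, 0 < ε → 0 < Pri {p | ∑ s, |p.1 s - p0 s| < ε})
    {Ω : Type*} [MeasurableSpace Ω] (P : Measure Ω) [IsProbabilityMeasure P]
    (X : ℕ → Ω → S) (hXmeas : ∀ i, Measurable (X i))
    (hindep : iIndepFun X P)
    (hlaw : ∀ (i : ℕ) (s : S), P (X i ⁻¹' {s}) = ENNReal.ofReal (p0 s))
    (ε : ℝ) (hε : 0 < ε) :
    ∀ᵐ ω ∂P, Tendsto (fun n : ℕ =>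
        (∫ p in {p | ∑ s, |p.1 s - p0 s| < ε},
            (∏ i ∈ Finset.range n, p.1 (X i ω)) ∂Pri) /
        (∫ p, (∏ i ∈ Finset.range n, p.1 (X i ω)) ∂Pri))
      atTop (nhds 1) :=
  posterior_consistency_general Pri p0 hp00 hp0sum hsupp P X hXmeas hindep hlaw ε hε
end
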